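/- arXiv:0709.4537 — 6 statements merged into one kernel-verified Lean document; each statement's English description precedes it below -/
import Mathlib

section
/- For every n ∈ ℕ, the primitive Legendre polynomial Π_{ζ,n+1}(z) = (z-ζ)·P_n(z) is orthogonal to all polynomials of degree at most n with respect to the Sobolev-type inner product ⟨p,q⟩ = p(ζ)·q(ζ) + ∫_{-1}^{1} p′(x)·q′(x) dx; that is, for every polynomial q of degree ≤ n, Π_{ζ,n+1}(ζ)·q(ζ) + ∫_{-1}^{1} Π_{ζ,n+1}′(x)·q′(x) dx = 0. -/
/-!
By the defining relation of `P n`, the derivative of the primitive `(X - C ζ) * P n` is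
`(n + 1) • L n`, and the primitive vanishes at the pole. The Sobolev product with `q` therefore
reduces to `(n + 1) ∫ L n · q'`, which is zero because `q'` has degree `< n` and `L n` is
orthogonal to all such polynomials.
-/

open Polynomial

/-- `L` is the sequence of monic Legendre polynomials: `L n` is monic of degree `n` and
orthogonal on `[-1,1]` to `x^k` for all `k < n`. -/
def IsMonicLegendre (L : ℕ → Polynomial ℝ) : Prop :=
  ∀ n : ℕ, (L n).Monic ∧ (L n).natDegree = n ∧
    ∀ k : ℕ, k < n → (∫ x in (-1:ℝ)..1, (L n).eval x * x ^ k) = 0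

/-- `P` is the sequence of polar Legendre polynomials with pole `ζ` associated to `L`:
`P n` is monic of degree `n` and `(n+1)·L_n(z) = P_n(z) + (z-ζ)·P_n′(z)` for all `z ∈ ℂ`. -/
def IsPolarLegendre (L : ℕ → Polynomial ℝ) (ζ : ℂ) (P : ℕ → Polynomial ℂ) : Prop :=
  ∀ n : ℕ, (P n).Monic ∧ (P n).natDegree = n ∧
    ∀ z : ℂ, ((n : ℂ) + 1) * ((L n).map (algebraMap ℝ ℂ)).eval z =
      (P n).eval z + (z - ζ) * ((P n).derivative.eval z)

theorem intervalIntegral.integral_mul_eval_eq_zero_of_degree_lt {f : ℝ → ℂ} {a b : ℝ}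
    {n : ℕ} (hf : IntervalIntegrable f MeasureTheory.volume a b)
    (horth : ∀ k < n, ∫ x in a..b, f x * (x : ℂ) ^ k = 0) {r : ℂ[X]} (hr : r.degree < n) :
    ∫ x in a..b, f x * r.eval (x : ℂ) = 0 := by
  simp_rw [eval_eq_sum, Polynomial.sum, Finset.mul_sum]
  rw [intervalIntegral.integral_finsetSum fun k _ =>
    hf.mul_continuousOn (by fun_prop)]
  refine Finset.sum_eq_zero fun k hk => ?_
  have hkn : k < n := by exact_mod_cast (le_degree_of_mem_supp k hk).trans_lt hr
  simp_rw [mul_left_comm (f _), intervalIntegral.integral_const_mul, horth k hkn, mul_zero]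

theorem Polynomial.integral_eval_map_ofReal_mul_pow (p : ℝ[X]) (a b : ℝ) (k : ℕ) :
    ∫ x in a..b, (p.map (algebraMap ℝ ℂ)).eval (x : ℂ) * (x : ℂ) ^ k =
      ((∫ x in a..b, p.eval x * x ^ k : ℝ) : ℂ) := by
  rw [← intervalIntegral.integral_ofReal]
  congr 1 with x
  push_cast
  rw [eval_map_algebraMap]
  exact congrArg (· * _) (aeval_algebraMap_apply_eq_algebraMap_eval x p)

theorem IsMonicLegendre.integral_eval_map_mul_eval_eq_zero {L : ℕ → ℝ[X]}
    (hL : IsMonicLegendre L) {n : ℕ} {r : ℂ[X]} (hr : r.degree < n) :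
    ∫ x in (-1:ℝ)..1, ((L n).map (algebraMap ℝ ℂ)).eval (x : ℂ) * r.eval (x : ℂ) = 0 :=
  intervalIntegral.integral_mul_eval_eq_zero_of_degree_lt
    (Continuous.intervalIntegrable (by fun_prop) _ _)
    (fun k hk => by
      rw [integral_eval_map_ofReal_mul_pow, (hL n).2.2 k hk, Complex.ofReal_zero]) hr

theorem IsPolarLegendre.eval_derivative_X_sub_C_mul {L : ℕ → ℝ[X]} {ζ : ℂ} {P : ℕ → ℂ[X]}
    (hP : IsPolarLegendre L ζ P) (n : ℕ) (z : ℂ) :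
    (derivative ((X - C ζ) * P n)).eval z =
      ((n : ℂ) + 1) * ((L n).map (algebraMap ℝ ℂ)).eval z := by
  rw [(hP n).2.2 z]
  simp

theorem Polynomial.degree_derivative_lt_of_natDegree_le {R : Type*} [Semiring R] {q : R[X]}
    {n : ℕ} (hq : q.natDegree ≤ n) : (derivative q).degree < n := by
  rcases eq_or_ne q 0 with rfl | hq0
  · simp
  · exact (degree_derivative_lt hq0).trans_le (degree_le_of_natDegree_le hq)

/-- The primitive Legendre polynomial `Π_{ζ,n+1}(z) = (z-ζ)·P_n(z)` is orthogonal to every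
polynomial of degree at most `n` with respect to the Sobolev-type inner product
`⟨p,q⟩ = p(ζ)·q(ζ) + ∫_{-1}^{1} p′(x)·q′(x) dx`. -/
theorem primitive_legendre_sobolev_orthogonality
    (L : ℕ → Polynomial ℝ) (ζ : ℂ) (P : ℕ → Polynomial ℂ)
    (hL : IsMonicLegendre L) (hP : IsPolarLegendre L ζ P)
    (n : ℕ) (q : Polynomial ℂ) (hq : q.natDegree ≤ n) :
    ((X - C ζ) * P n).eval ζ * q.eval ζ +
      (∫ x in (-1:ℝ)..1,
        (Polynomial.derivative ((X - C ζ) * P n)).eval (x : ℂ) *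
          (Polynomial.derivative q).eval (x : ℂ)) = 0 := by
  simp_rw [hP.eval_derivative_X_sub_C_mul, mul_assoc, intervalIntegral.integral_const_mul,
    hL.integral_eval_map_mul_eval_eq_zero (degree_derivative_lt_of_natDegree_le hq)]
  simp
end

section
/- For all integers n, m with 0 < m < n-1, the polar Legendre polynomial P_n with pole ζ ∈ ℂ satisfies ∫_{-1}^{1} (x-ζ)·P_n(x)·L_m(x) dx = 0. -/
open Polynomial

/-! With `Q = (X - ζ) P_n` the defining relation says `Q' = (n+1) L_n`. Since `m > 0`, `L_m` has
mean zero on `[-1,1]`, so it has a polynomial antiderivative `R` of degree `m + 1 < n` vanishing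
at `±1`. Integrating by parts, `∫ Q L_m = -(n+1) ∫ L_n R`, which vanishes by orthogonality of `L_n`
to polynomials of lower degree. -/

namespace Polynomial

theorem exists_derivative_eq {K : Type*} [Field K] [CharZero K] (p : K[X]) :
    ∃ q : K[X], derivative q = p ∧ q.natDegree ≤ p.natDegree + 1 := by
  refine ⟨∑ k ∈ Finset.range (p.natDegree + 1), C (p.coeff k / (k + 1)) * X ^ (k + 1), ?_, ?_⟩
  · conv_rhs => rw [p.as_sum_range_C_mul_X_pow]
    rw [map_sum]
    refine Finset.sum_congr rfl fun k _ => ?_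
    rw [derivative_C_mul_X_pow, Nat.add_sub_cancel, Nat.cast_add_one,
      div_mul_cancel₀ _ (Nat.cast_add_one_ne_zero k)]
  · refine natDegree_sum_le_of_forall_le _ _ fun k hk => (natDegree_C_mul_X_pow_le _ _).trans ?_
    have := Finset.mem_range.mp hk
    omega

theorem integral_eval_derivative (p : ℝ[X]) (a b : ℝ) :
    ∫ x in a..b, (derivative p).eval x = p.eval b - p.eval a :=
  intervalIntegral.integral_eq_sub_of_hasDerivAt (fun x _ => p.hasDerivAt x)
    (p.derivative.continuous.intervalIntegrable a b)

theorem exists_derivative_eq_of_integral_eq_zero {p : ℝ[X]} {a b : ℝ}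
    (hp : ∫ x in a..b, p.eval x = 0) :
    ∃ q : ℝ[X], derivative q = p ∧ q.natDegree ≤ p.natDegree + 1 ∧
      q.eval a = 0 ∧ q.eval b = 0 := by
  obtain ⟨q, hq, hdeg⟩ := p.exists_derivative_eq
  refine ⟨q - C (q.eval a), by simp [hq], (natDegree_sub_C).le.trans hdeg, by simp, ?_⟩
  have := (q - C (q.eval a)).integral_eval_derivative a b
  simp_all

theorem integral_mul_eval_eq_zero_of_natDegree_lt {f : ℝ → ℝ} {a b : ℝ} {n : ℕ}
    (hf : IntervalIntegrable f MeasureTheory.volume a b)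
    (horth : ∀ k < n, ∫ x in a..b, f x * x ^ k = 0) {p : ℝ[X]} (hp : p.natDegree < n) :
    ∫ x in a..b, f x * p.eval x = 0 := by
  simp_rw [eval_eq_sum_range, Finset.mul_sum, mul_left_comm (f _)]
  rw [intervalIntegral.integral_finsetSum fun k _ =>
    (hf.mul_continuousOn (continuous_pow k).continuousOn).const_mul _]
  refine Finset.sum_eq_zero fun k hk => ?_
  rw [intervalIntegral.integral_const_mul, horth k (by grind), mul_zero]

theorem integral_eval_mul_derivative_eval_ofReal (Q : ℂ[X]) (R : ℝ[X]) (a b : ℝ) :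
    ∫ x in a..b, Q.eval (x : ℂ) * (((derivative R).eval x : ℝ) : ℂ) =
      Q.eval (b : ℂ) * ((R.eval b : ℝ) : ℂ) - Q.eval (a : ℂ) * ((R.eval a : ℝ) : ℂ) -
        ∫ x in a..b, (derivative Q).eval (x : ℂ) * ((R.eval x : ℝ) : ℂ) :=
  intervalIntegral.integral_mul_deriv_eq_deriv_mul
    (fun x _ => (Q.hasDerivAt (x : ℂ)).comp_ofReal) (fun x _ => (R.hasDerivAt x).ofReal_comp)
    ((Q.derivative.continuous.comp Complex.continuous_ofReal).intervalIntegrable a b)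
    ((Complex.continuous_ofReal.comp R.derivative.continuous).intervalIntegrable a b)

end Polynomial

theorem IsPolarLegendre.derivative_X_sub_C_mul {L : ℕ → ℝ[X]} {ζ : ℂ} {P : ℕ → ℂ[X]}
    (hP : IsPolarLegendre L ζ P) (n : ℕ) :
    derivative ((X - C ζ) * P n) = C ((n : ℂ) + 1) * (L n).map (algebraMap ℝ ℂ) := by
  refine Polynomial.funext fun z => ?_
  have h := (hP n).2.2 z
  simp only [derivative_mul, eval_mul, eval_add, eval_sub, eval_X, eval_C, derivative_sub,
    derivative_X, derivative_C, sub_zero, one_mul] at h ⊢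
  linear_combination -h

/-- For `0 < m < n-1`: `∫_{-1}^{1} (x-ζ)·P_n(x)·L_m(x) dx = 0`. -/
theorem polar_legendre_integral_middle
    (L : ℕ → Polynomial ℝ) (ζ : ℂ) (P : ℕ → Polynomial ℂ)
    (hL : IsMonicLegendre L) (hP : IsPolarLegendre L ζ P)
    (n m : ℕ) (hm : 0 < m) (hmn : m + 1 < n) :
    (∫ x in (-1:ℝ)..1,
        ((x : ℂ) - ζ) * (P n).eval (x : ℂ) * (((L m).eval x : ℝ) : ℂ)) = 0 := by
  obtain ⟨-, hLm_deg, hLm_orth⟩ := hL m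
  obtain ⟨R, hR, hR_deg, hR_left, hR_right⟩ :=
    exists_derivative_eq_of_integral_eq_zero (by simpa using hLm_orth 0 hm)
  have hR_lt : R.natDegree < n := by omega
  calc (∫ x in (-1:ℝ)..1, ((x : ℂ) - ζ) * (P n).eval (x : ℂ) * (((L m).eval x : ℝ) : ℂ))
      = ∫ x in (-1:ℝ)..1,
          ((X - C ζ) * P n).eval (x : ℂ) * (((derivative R).eval x : ℝ) : ℂ) := by
        simp [hR]
    _ = -(((n : ℂ) + 1) * ((∫ x in (-1:ℝ)..1, (L n).eval x * R.eval x : ℝ) : ℂ)) := by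
        rw [integral_eval_mul_derivative_eval_ofReal, hP.derivative_X_sub_C_mul,
          hR_left, hR_right, ← intervalIntegral.integral_ofReal,
          ← intervalIntegral.integral_const_mul]
        simp [eval_map_algebraMap, ← Complex.coe_algebraMap,
          aeval_algebraMap_apply_eq_algebraMap_eval, mul_assoc]
    _ = 0 := by
        rw [integral_mul_eval_eq_zero_of_natDegree_lt
          ((L n).continuous.intervalIntegrable _ _) (hL n).2.2 hR_lt]
        simp
end

section
/- For every n ∈ ℕ and ζ ∈ ℂ, if w ∈ ℂ is a zero of the polar Legendre polynomial P_n of multiplicity at least 2, then the multiplicity of w is exactly 2 and w is a real number lying in the open interval (−1,1). -/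
/-!
Put `Q = (X - ζ) P_n`; the defining relation says exactly `Q' = (n + 1) L_n`. A zero `w` of `P_n`
of multiplicity `m ≥ 2` is a zero of `Q` of multiplicity at least `m`, hence a zero of `L_n` of
multiplicity at least `m - 1 ≥ 1`. By the classical orthogonality argument, `L_n` has `n` simple
zeros, all in `(-1, 1)`: if `q` is the product of the `X - c` over the zeros `c ∈ (-1, 1)` of odd
multiplicity, then `L_n q` has no sign change on `(-1, 1)`, so `∫ L_n q ≠ 0` and orthogonality
forces `deg q ≥ n`. Hence `m - 1 = 1` and `w` is a real number in `(-1, 1)`.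
-/

open Polynomial

namespace Polynomial

open Set

theorem rootMultiplicity_C_mul {R : Type*} [CommRing R] [IsDomain R] {a : R} (ha : a ≠ 0)
    (p : R[X]) (x : R) : (C a * p).rootMultiplicity x = p.rootMultiplicity x := by
  rcases eq_or_ne p 0 with rfl | hp
  · simp
  · rw [rootMultiplicity_mul (mul_ne_zero (C_ne_zero.mpr ha) hp), rootMultiplicity_C, zero_add]

theorem eval_mul_eval_nonneg_of_even_rootMultiplicity {s : Set ℝ} (hs : s.OrdConnected)
    {p : ℝ[X]} (hp : p ≠ 0) (heven : ∀ c ∈ s, Even (p.rootMultiplicity c))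
    {x y : ℝ} (hx : x ∈ s) (hy : y ∈ s) : 0 ≤ p.eval x * p.eval y := by
  induction hd : p.natDegree using Nat.strong_induction_on generalizing p with
  | _ d ih =>
  by_cases hroot : ∃ c ∈ s, p.IsRoot c
  · obtain ⟨c, hc, hpc⟩ := hroot
    set m := p.rootMultiplicity c
    set g := p /ₘ (X - C c) ^ m
    have hfactor : (X - C c) ^ m * g = p := pow_mul_divByMonic_rootMultiplicity_eq p c
    have hg : g ≠ 0 := by
      rintro hg
      rw [hg, mul_zero] at hfactor
      exact hp hfactor.symm
    have hgdeg : g.natDegree < d := by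
      have hm : 0 < m := (rootMultiplicity_pos hp).2 hpc
      have hsum := congrArg natDegree hfactor
      rw [natDegree_mul (pow_ne_zero _ (X_sub_C_ne_zero c)) hg, natDegree_pow,
        natDegree_X_sub_C] at hsum
      omega
    have hgeven : ∀ c' ∈ s, Even (g.rootMultiplicity c') := by
      intro c' hc'
      have h := heven c' hc'
      rw [← hfactor, rootMultiplicity_mul (hfactor ▸ hp), ← count_roots, roots_pow,
        roots_X_sub_C, Multiset.count_nsmul] at h
      exact (Nat.even_add.mp h).mp ((heven c hc).mul_right _)
    rw [← hfactor]
    simp only [eval_mul, eval_pow, eval_sub, eval_X, eval_C]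
    calc 0 ≤ ((x - c) * (y - c)) ^ m * (g.eval x * g.eval y) :=
          mul_nonneg ((heven c hc).pow_nonneg _) (ih _ hgdeg hg hgeven rfl)
      _ = _ := by rw [mul_pow]; ring
  · push Not at hroot
    by_contra! hneg
    have h0 : (0 : ℝ) ∈ uIcc (p.eval x) (p.eval y) := by
      rcases mul_neg_iff.mp hneg with h | h
      exacts [mem_uIcc.mpr (Or.inr ⟨h.2.le, h.1.le⟩),
        mem_uIcc.mpr (Or.inl ⟨h.1.le, h.2.le⟩)]
    obtain ⟨c, hc, hpc⟩ := intermediate_value_uIcc p.continuous.continuousOn h0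
    exact hroot c (hs.uIcc_subset hx hy hc) hpc

theorem integral_eval_ne_zero_of_even_rootMultiplicity {a b : ℝ} (hab : a < b) {p : ℝ[X]}
    (hp : p ≠ 0) (heven : ∀ c ∈ Ioo a b, Even (p.rootMultiplicity c)) :
    ∫ x in a..b, p.eval x ≠ 0 := by
  obtain ⟨x₀, hx₀, hx₀root⟩ := (Ioo_infinite hab).exists_notMem_finset p.roots.toFinset
  have hpx₀ : p.eval x₀ ≠ 0 := fun h => hx₀root (by simpa [hp] using h)
  have hcont : Continuous fun x => p.eval x₀ * p.eval x := continuous_const.mul p.continuous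
  have hsign : ∀ x ∈ Icc a b, 0 ≤ p.eval x₀ * p.eval x := by
    rw [← closure_Ioo hab.ne]
    exact le_on_closure (fun x hx => eval_mul_eval_nonneg_of_even_rootMultiplicity
      ordConnected_Ioo hp heven hx₀ hx) continuousOn_const hcont.continuousOn
  have hpos := intervalIntegral.integral_pos hab hcont.continuousOn
    (fun x hx => hsign x (Ioc_subset_Icc_self hx))
    ⟨x₀, Ioo_subset_Icc_self hx₀, mul_self_pos.mpr hpx₀⟩
  rw [intervalIntegral.integral_const_mul] at hpos
  exact right_ne_zero_of_mul hpos.ne'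

theorem integral_eval_mul_eq_zero_of_orthogonal {a b : ℝ} {p q : ℝ[X]} {n : ℕ}
    (horth : ∀ k < n, ∫ x in a..b, p.eval x * x ^ k = 0) (hq : q.natDegree < n) :
    ∫ x in a..b, (p * q).eval x = 0 := by
  have hexpand : ∀ x : ℝ, (p * q).eval x =
      ∑ k ∈ Finset.range (q.natDegree + 1), q.coeff k * (p.eval x * x ^ k) := by
    intro x
    rw [eval_mul, eval_eq_sum_range (p := q), Finset.mul_sum]
    exact Finset.sum_congr rfl fun k _ => by ring
  simp_rw [hexpand]
  rw [intervalIntegral.integral_finsetSum]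
  · refine Finset.sum_eq_zero fun k hk => ?_
    rw [intervalIntegral.integral_const_mul, horth k (by rw [Finset.mem_range] at hk; omega),
      mul_zero]
  · exact fun k _ =>
      (continuous_const.mul (p.continuous.mul (continuous_pow k))).intervalIntegrable _ _

open scoped Classical in
theorem le_card_oddRoots_of_orthogonal {a b : ℝ} (hab : a < b) {p : ℝ[X]} (hp : p ≠ 0)
    {n : ℕ} (horth : ∀ k < n, ∫ x in a..b, p.eval x * x ^ k = 0) :
    n ≤ {c ∈ p.roots.toFinset | c ∈ Ioo a b ∧ Odd (p.rootMultiplicity c)}.card := by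
  set S := {c ∈ p.roots.toFinset | c ∈ Ioo a b ∧ Odd (p.rootMultiplicity c)}
  by_contra! hS
  set q := ∏ c ∈ S, (X - C c)
  have hpq : p * q ≠ 0 :=
    mul_ne_zero hp (monic_prod_of_monic _ _ fun c _ => monic_X_sub_C c).ne_zero
  have heven : ∀ c ∈ Ioo a b, Even ((p * q).rootMultiplicity c) := by
    intro c hc
    have hcS : c ∈ S ↔ Odd (p.rootMultiplicity c) := by
      simp only [S, Finset.mem_filter, Multiset.mem_toFinset, mem_roots hp, hc, true_and,
        and_iff_right_iff_imp]
      exact fun hodd => (rootMultiplicity_pos hp).mp hodd.pos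
    rw [rootMultiplicity_mul hpq, ← count_roots q, roots_prod_X_sub_C,
      Multiset.count_eq_of_nodup S.nodup]
    by_cases h : c ∈ S
    · simp only [Finset.mem_val, h, if_true]
      exact Nat.even_add_one.mpr (Nat.not_even_iff_odd.mpr (hcS.mp h))
    · simp only [Finset.mem_val, h, if_false, add_zero]
      exact Nat.not_odd_iff_even.mp (mt hcS.mpr h)
  refine integral_eval_ne_zero_of_even_rootMultiplicity hab hpq heven
    (integral_eval_mul_eq_zero_of_orthogonal horth ?_)
  rwa [natDegree_finsetProd_X_sub_C_eq_card]

open scoped Classical in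
theorem roots_nodup_and_mem_Ioo_of_orthogonal {a b : ℝ} (hab : a < b) {p : ℝ[X]} (hp : p ≠ 0)
    (horth : ∀ k < p.natDegree, ∫ x in a..b, p.eval x * x ^ k = 0) :
    Multiset.card p.roots = p.natDegree ∧ p.roots.Nodup ∧ ∀ x ∈ p.roots, x ∈ Ioo a b := by
  set S := {c ∈ p.roots.toFinset | c ∈ Ioo a b ∧ Odd (p.rootMultiplicity c)}
  have hS : p.natDegree ≤ S.card := le_card_oddRoots_of_orthogonal hab hp horth
  have hSsub : S ⊆ p.roots.toFinset := Finset.filter_subset _ _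
  have h₁ := Finset.card_le_card hSsub
  have h₂ := p.roots.toFinset_card_le
  have h₃ := p.card_roots'
  have hSeq : S = p.roots.toFinset := Finset.eq_of_subset_of_card_le hSsub (by omega)
  refine ⟨by omega, Multiset.toFinset_card_eq_card_iff_nodup.mp (by omega), fun x hx => ?_⟩
  have hxS : x ∈ S := hSeq ▸ Multiset.mem_toFinset.mpr hx
  exact (Finset.mem_filter.mp hxS).2.1

theorem roots_map_ofReal_of_orthogonal {a b : ℝ} (hab : a < b) {p : ℝ[X]} (hp : p ≠ 0)
    (horth : ∀ k < p.natDegree, ∫ x in a..b, p.eval x * x ^ k = 0) :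
    (p.map (algebraMap ℝ ℂ)).roots = p.roots.map (algebraMap ℝ ℂ) :=
  (splits_iff_card_roots.mpr (roots_nodup_and_mem_Ioo_of_orthogonal hab hp horth).1).roots_map _

theorem rootMultiplicity_map_ofReal_le_one_of_orthogonal {a b : ℝ} (hab : a < b) {p : ℝ[X]}
    (hp : p ≠ 0) (horth : ∀ k < p.natDegree, ∫ x in a..b, p.eval x * x ^ k = 0) (w : ℂ) :
    (p.map (algebraMap ℝ ℂ)).rootMultiplicity w ≤ 1 := by
  classical
  rw [← count_roots, roots_map_ofReal_of_orthogonal hab hp horth]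
  exact Multiset.nodup_iff_count_le_one.mp
    ((roots_nodup_and_mem_Ioo_of_orthogonal hab hp horth).2.1.map (algebraMap ℝ ℂ).injective) w

theorem exists_mem_Ioo_of_isRoot_map_ofReal_of_orthogonal {a b : ℝ} (hab : a < b) {p : ℝ[X]}
    (hp : p ≠ 0) (horth : ∀ k < p.natDegree, ∫ x in a..b, p.eval x * x ^ k = 0) {w : ℂ}
    (hw : (p.map (algebraMap ℝ ℂ)).IsRoot w) : ∃ x ∈ Ioo a b, (x : ℂ) = w := by
  have hw' : w ∈ (p.map (algebraMap ℝ ℂ)).roots := (mem_roots (map_ne_zero hp)).mpr hw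
  rw [roots_map_ofReal_of_orthogonal hab hp horth, Multiset.mem_map] at hw'
  obtain ⟨x, hx, rfl⟩ := hw'
  exact ⟨x, (roots_nodup_and_mem_Ioo_of_orthogonal hab hp horth).2.2 x hx, rfl⟩

theorem derivative_X_sub_C_mul_eq_C_mul {R : Type*} [CommRing R] [IsDomain R] [Infinite R]
    {P G : R[X]} {ζ c : R}
    (h : ∀ z, c * G.eval z = P.eval z + (z - ζ) * P.derivative.eval z) :
    derivative ((X - C ζ) * P) = C c * G := by
  refine Polynomial.funext fun z => ?_
  simp [derivative_mul, h z]

theorem rootMultiplicity_le_rootMultiplicity_derivative_X_sub_C_mul_add_one {R : Type*}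
    [CommRing R] [IsDomain R] [CharZero R] {P : R[X]} (hP : P ≠ 0) (ζ w : R) :
    P.rootMultiplicity w ≤ (derivative ((X - C ζ) * P)).rootMultiplicity w + 1 := by
  have h₁ := rootMultiplicity_le_rootMultiplicity_of_dvd
    (mul_ne_zero (X_sub_C_ne_zero ζ) hP) (dvd_mul_left P _) w
  have h₂ := rootMultiplicity_sub_one_le_derivative_rootMultiplicity ((X - C ζ) * P) w
  omega

end Polynomial

/-- A zero of `P_n` of multiplicity at least 2 has multiplicity exactly 2 and is a real
number in the open interval `(-1,1)`. -/
theorem polar_legendre_multiple_zeros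
    (L : ℕ → Polynomial ℝ) (ζ : ℂ) (P : ℕ → Polynomial ℂ)
    (hL : IsMonicLegendre L) (hP : IsPolarLegendre L ζ P)
    (n : ℕ) (w : ℂ) (hw : 2 ≤ (P n).rootMultiplicity w) :
    (P n).rootMultiplicity w = 2 ∧ w.im = 0 ∧ -1 < w.re ∧ w.re < 1 := by
  obtain ⟨hLmonic, hLdeg, hLorth⟩ := hL n
  obtain ⟨hPmonic, -, hPeval⟩ := hP n
  have horth : ∀ k < (L n).natDegree, ∫ x in (-1:ℝ)..1, (L n).eval x * x ^ k = 0 :=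
    fun k hk => hLorth k (hLdeg ▸ hk)
  have hmult := rootMultiplicity_le_rootMultiplicity_derivative_X_sub_C_mul_add_one
    hPmonic.ne_zero ζ w
  rw [derivative_X_sub_C_mul_eq_C_mul hPeval,
    rootMultiplicity_C_mul (Nat.cast_add_one_ne_zero n)] at hmult
  have hsimple :=
    rootMultiplicity_map_ofReal_le_one_of_orthogonal (by norm_num) hLmonic.ne_zero horth w
  have hroot : ((L n).map (algebraMap ℝ ℂ)).IsRoot w :=
    (rootMultiplicity_pos ((hLmonic.map _).ne_zero)).mp (by omega)
  obtain ⟨x, hx, rfl⟩ :=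
    exists_mem_Ioo_of_isRoot_map_ofReal_of_orthogonal (by norm_num) hLmonic.ne_zero horth hroot
  exact ⟨by omega, Complex.ofReal_im x, by simpa using hx.1, by simpa using hx.2⟩
end

section
/- Let n ≥ 1 and suppose the pole ζ satisfies ζ = 1, ζ = −1, or L_n′(ζ) = 0. Then n·(z-ζ)·P_n(z) = (z²-1)·L_n′(z) for all z ∈ ℂ; in particular, every zero of the polar Legendre polynomial P_n is either 1, −1, or one of the n−1 critical points of the Legendre polynomial L_n (zeros of L_n′). -/
open Polynomial

/-!
Integrating by parts twice (the boundary terms die because `x² - 1` vanishes at `±1`) shows that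
the operator `y ↦ ((x² - 1) y')'`, which does not raise degrees, is symmetric for the `L²[-1,1]`
pairing. Hence `((x² - 1) L_n')' - n(n+1) L_n`, whose degree is `< n` by a leading-coefficient
count, is orthogonal to itself, which gives the Legendre equation. With it and the relation
defining `P_n`, the polynomial `D = n (z - ζ) P_n - (z² - 1) L_n'` has `D' = 0`, so `D` is the
constant `D(ζ) = -(ζ² - 1) L_n'(ζ)`, which vanishes for the degenerate poles.
-/

open MeasureTheory Set intervalIntegral

noncomputable def legendreOp {R : Type*} [CommRing R] (p : R[X]) : R[X] :=
  derivative ((X ^ 2 - 1) * derivative p)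

section LegendreOperator

variable {R : Type*} [CommRing R]

theorem coeff_legendreOp (p : R[X]) (m : ℕ) :
    (legendreOp p).coeff m = (m + 1) * (m * p.coeff m - (m + 2) * p.coeff (m + 2)) := by
  rcases m with _ | k
  · simp [legendreOp, coeff_derivative, sub_mul]
    ring
  · rw [legendreOp, coeff_derivative, sub_mul, one_mul, coeff_sub, show k + 1 + 1 = k + 2 from rfl,
      coeff_X_pow_mul, coeff_derivative, coeff_derivative]
    push_cast
    ring

theorem natDegree_legendreOp_le (p : R[X]) : (legendreOp p).natDegree ≤ p.natDegree := by
  refine natDegree_le_iff_coeff_eq_zero.mpr fun m hm => ?_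
  rw [coeff_legendreOp, coeff_eq_zero_of_natDegree_lt (by exact_mod_cast hm),
    coeff_eq_zero_of_natDegree_lt (by omega)]
  ring

theorem legendreOp_map {S : Type*} [CommRing S] (f : R →+* S) (p : R[X]) :
    legendreOp (p.map f) = (legendreOp p).map f := by
  simp [legendreOp, derivative_map]

end LegendreOperator

theorem integral_derivative_mul_eq_neg {F : ℝ[X]} {a b : ℝ} (ha : F.eval a = 0)
    (hb : F.eval b = 0) (q : ℝ[X]) :
    ∫ x in a..b, (derivative F).eval x * q.eval x =
      -∫ x in a..b, F.eval x * (derivative q).eval x := by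
  have hparts := integral_mul_deriv_eq_deriv_mul (a := a) (b := b)
    (fun x _ => q.hasDerivAt x) (fun x _ => F.hasDerivAt x)
    ((derivative q).continuous.intervalIntegrable _ _)
    ((derivative F).continuous.intervalIntegrable _ _)
  simp only [ha, hb, mul_zero, sub_zero, zero_sub] at hparts
  simp only [mul_comm (eval _ (derivative F)), mul_comm (eval _ F), hparts]

theorem integral_legendreOp_mul_comm (p q : ℝ[X]) :
    ∫ x in (-1:ℝ)..1, (legendreOp p).eval x * q.eval x =
      ∫ x in (-1:ℝ)..1, p.eval x * (legendreOp q).eval x := by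
  simp only [legendreOp, mul_comm (eval _ p)]
  rw [integral_derivative_mul_eq_neg (by simp) (by simp),
    integral_derivative_mul_eq_neg (by simp) (by simp)]
  congr 2 with x
  simp only [eval_mul]
  ring

theorem eq_zero_of_integral_mul_self_eq_zero {a b : ℝ} (hab : a < b) {p : ℝ[X]}
    (h : ∫ x in a..b, p.eval x * p.eval x = 0) : p = 0 := by
  have hae : (fun x => p.eval x * p.eval x) =ᵐ[volume.restrict (Ioc a b)] 0 :=
    (integral_eq_zero_iff_of_le_of_nonneg_ae hab.le
      (Filter.Eventually.of_forall fun x => mul_self_nonneg _)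
      ((p.continuous.mul p.continuous).intervalIntegrable _ _)).mp h
  have hroots : Ioc a b ⊆ {x | p.IsRoot x} := fun x hx =>
    mul_self_eq_zero.mp (Measure.eqOn_Ioc_of_ae_eq volume hae
      (p.continuous.mul p.continuous).continuousOn continuousOn_const hx)
  exact p.eq_zero_of_infinite_isRoot ((Ioc_infinite hab).mono hroots)

namespace IsMonicLegendre

variable {L : ℕ → ℝ[X]}

theorem integral_mul_eq_zero_of_natDegree_lt (hL : IsMonicLegendre L) {n : ℕ} {q : ℝ[X]}
    (hq : q.natDegree < n) : ∫ x in (-1:ℝ)..1, (L n).eval x * q.eval x = 0 := by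
  simp only [eval_eq_sum_range' hq, Finset.mul_sum, mul_left_comm (eval _ (L n))]
  rw [integral_finsetSum (f := fun i x => q.coeff i * ((L n).eval x * x ^ i)) fun i _ =>
    (continuous_const.mul ((L n).continuous.mul (continuous_pow i))).intervalIntegrable _ _]
  refine Finset.sum_eq_zero fun i hi => ?_
  rw [intervalIntegral.integral_const_mul, (hL n).2.2 i (Finset.mem_range.mp hi), mul_zero]

theorem legendreOp_eq (hL : IsMonicLegendre L) (n : ℕ) :
    legendreOp (L n) = C ((n : ℝ) * (n + 1)) * L n := by
  set R := legendreOp (L n) - C ((n : ℝ) * (n + 1)) * L n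
  have hR_coeff : ∀ m, n ≤ m → R.coeff m = 0 := by
    intro m hm
    have htop : (L n).coeff (m + 2) = 0 :=
      coeff_eq_zero_of_natDegree_lt (by rw [(hL n).2.1]; omega)
    rcases hm.eq_or_lt with rfl | hlt
    · have hlead : (L n).coeff n = 1 := by
        simpa [(hL n).2.1] using (hL n).1.coeff_natDegree
      simp only [R, coeff_sub, coeff_legendreOp, coeff_C_mul, hlead, htop]
      ring
    · have hm0 : (L n).coeff m = 0 :=
        coeff_eq_zero_of_natDegree_lt (by rwa [(hL n).2.1])
      simp only [R, coeff_sub, coeff_legendreOp, coeff_C_mul, hm0, htop]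
      ring
  have hR_orth : ∀ q : ℝ[X], q.natDegree < n → ∫ x in (-1:ℝ)..1, R.eval x * q.eval x = 0 := by
    intro q hq
    have hLq : ∫ x in (-1:ℝ)..1, (L n).eval x * q.eval x = 0 := hL.integral_mul_eq_zero_of_natDegree_lt hq
    have hLopq : ∫ x in (-1:ℝ)..1, (legendreOp (L n)).eval x * q.eval x = 0 := by
      rw [integral_legendreOp_mul_comm]
      exact hL.integral_mul_eq_zero_of_natDegree_lt ((natDegree_legendreOp_le q).trans_lt hq)
    calc ∫ x in (-1:ℝ)..1, R.eval x * q.eval x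
        = (∫ x in (-1:ℝ)..1, (legendreOp (L n)).eval x * q.eval x) -
            (n * (n + 1)) * ∫ x in (-1:ℝ)..1, (L n).eval x * q.eval x := by
          rw [← intervalIntegral.integral_const_mul, ← intervalIntegral.integral_sub
            (Continuous.intervalIntegrable (by fun_prop) _ _)
            (Continuous.intervalIntegrable (by fun_prop) _ _)]
          congr 1 with x
          simp only [R, eval_sub, eval_mul, eval_C]
          ring
      _ = 0 := by rw [hLopq, hLq]; ring
  -- `R` has degree `< n`, so it is orthogonal to itself.
  by_contra hne
  have hR0 : R ≠ 0 := sub_ne_zero.mpr hne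
  have hR_deg : R.natDegree < n := (natDegree_lt_iff_degree_lt hR0).mpr <|
    (degree_lt_iff_coeff_zero R n).mpr fun m hm => hR_coeff m (by exact_mod_cast hm)
  exact hR0 (eq_zero_of_integral_mul_self_eq_zero (by norm_num) (hR_orth R hR_deg))

end IsMonicLegendre

theorem C_mul_X_sub_C_mul_eq_of_legendreOp_eq {R : Type*} [CommRing R] [IsAddTorsionFree R]
    {ℓ p : R[X]} {ζ : R} {n : ℕ} (hℓ : legendreOp ℓ = C ((n : R) * (n + 1)) * ℓ)
    (hp : C ((n : R) + 1) * ℓ = p + (X - C ζ) * derivative p)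
    (hζ : (ζ ^ 2 - 1) * (derivative ℓ).eval ζ = 0) :
    C (n : R) * ((X - C ζ) * p) = (X ^ 2 - 1) * derivative ℓ := by
  set D := C (n : R) * ((X - C ζ) * p) - (X ^ 2 - 1) * derivative ℓ
  have hD' : derivative D = 0 := by
    have hderiv : derivative D = C (n : R) * (p + (X - C ζ) * derivative p) - legendreOp ℓ := by
      rw [derivative_sub, derivative_C_mul, derivative_mul, derivative_sub, derivative_X,
        derivative_C, sub_zero, one_mul]
      rfl
    rw [hderiv, ← hp, hℓ, ← mul_assoc, ← C_mul, sub_self]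
  have hD_const := eq_C_of_derivative_eq_zero hD'
  have hD_coeff : D.coeff 0 = 0 := by
    rw [← eval_C (a := D.coeff 0) (x := ζ), ← hD_const]
    simp [D, hζ]
  rw [← sub_eq_zero, show _ - _ = D from rfl, hD_const, hD_coeff, map_zero]

theorem polar_legendre_degenerate_pole_general
    (L : ℕ → Polynomial ℝ) (ζ : ℂ) (P : ℕ → Polynomial ℂ)
    (hL : IsMonicLegendre L) (hP : IsPolarLegendre L ζ P)
    (n : ℕ)
    (hζ : ζ = 1 ∨ ζ = -1 ∨ (Polynomial.derivative ((L n).map (algebraMap ℝ ℂ))).eval ζ = 0) :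
    (∀ z : ℂ, (n : ℂ) * (z - ζ) * (P n).eval z =
        (z ^ 2 - 1) * (Polynomial.derivative ((L n).map (algebraMap ℝ ℂ))).eval z) ∧
    (∀ z : ℂ, (P n).eval z = 0 →
        z = 1 ∨ z = -1 ∨ (Polynomial.derivative ((L n).map (algebraMap ℝ ℂ))).eval z = 0) := by
  set ℓ := (L n).map (algebraMap ℝ ℂ)
  have hℓ : legendreOp ℓ = C ((n : ℂ) * (n + 1)) * ℓ := by
    simp [ℓ, legendreOp_map, hL.legendreOp_eq n]
  have hpolar : C ((n : ℂ) + 1) * ℓ = P n + (X - C ζ) * derivative (P n) :=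
    Polynomial.funext fun z => by simpa [ℓ] using (hP n).2.2 z
  have hζ' : (ζ ^ 2 - 1) * (derivative ℓ).eval ζ = 0 := by
    rcases hζ with rfl | rfl | h
    · norm_num
    · norm_num
    · rw [h, mul_zero]
  have hid : ∀ z : ℂ, (n : ℂ) * (z - ζ) * (P n).eval z = (z ^ 2 - 1) * (derivative ℓ).eval z :=
    fun z => by
      simpa [mul_assoc] using congrArg (eval z) (C_mul_X_sub_C_mul_eq_of_legendreOp_eq hℓ hpolar hζ')
  refine ⟨hid, fun z hz => ?_⟩
  have hzero : (z ^ 2 - 1) * (derivative ℓ).eval z = 0 := by rw [← hid, hz, mul_zero]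
  rcases mul_eq_zero.mp hzero with h | h
  · rw [sub_eq_zero, sq_eq_one_iff] at h
    tauto
  · exact Or.inr (Or.inr h)

/-- If `ζ = 1`, `ζ = −1` or `L_n′(ζ) = 0`, then `n·(z-ζ)·P_n(z) = (z²-1)·L_n′(z)` for all
`z`, and every zero of `P_n` is `1`, `−1`, or a critical point of `L_n`. -/
theorem polar_legendre_degenerate_pole
    (L : ℕ → Polynomial ℝ) (ζ : ℂ) (P : ℕ → Polynomial ℂ)
    (hL : IsMonicLegendre L) (hP : IsPolarLegendre L ζ P)
    (n : ℕ) (hn : 1 ≤ n)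
    (hζ : ζ = 1 ∨ ζ = -1 ∨ (Polynomial.derivative ((L n).map (algebraMap ℝ ℂ))).eval ζ = 0) :
    (∀ z : ℂ, (n : ℂ) * (z - ζ) * (P n).eval z =
        (z ^ 2 - 1) * (Polynomial.derivative ((L n).map (algebraMap ℝ ℂ))).eval z) ∧
    (∀ z : ℂ, (P n).eval z = 0 →
        z = 1 ∨ z = -1 ∨ (Polynomial.derivative ((L n).map (algebraMap ℝ ℂ))).eval z = 0) :=
  polar_legendre_degenerate_pole_general L ζ P hL hP n hζ
end

section
/- For n ≥ 1 and ζ ∈ ℂ, every zero z₀ of the polar Legendre polynomial P_n satisfies |(z₀²-1)·L_n′(z₀)| = |(ζ²-1)·L_n′(ζ)|; that is, all zeros of P_n lie on the lemniscate {z ∈ ℂ : |(z²-1)·L_n′(z)| = |(ζ²-1)·L_n′(ζ)|}. -/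
/-!
The Legendre differential operator `D p = ((X² - 1) p′)′` is symmetric for the pairing
`⟨p, q⟩ = ∫₋₁¹ p q`, since `D p · q - p · D q` is the derivative of a multiple of `X² - 1`,
and it does not raise degrees. Hence `D L_n - n(n+1) L_n` has degree `< n` and is orthogonal
to all polynomials of degree `< n`, so it vanishes: `((X² - 1) L_n′)′ = n(n+1) L_n`.
The polar relation says `(n+1) L_n = ((X - ζ) P_n)′`, so `(X² - 1) L_n′` and `n (X - ζ) P_n`
have the same derivative and differ by the constant `(ζ² - 1) L_n′(ζ)`. At a zero `z₀` of
`P_n` this gives `(z₀² - 1) L_n′(z₀) = (ζ² - 1) L_n′(ζ)`, an equality of complex numbers.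
-/

open Polynomial

open intervalIntegral MeasureTheory

namespace Polynomial

section IntervalIntegral

variable {a b : ℝ}

noncomputable def intervalIntegralEval (a b : ℝ) : ℝ[X] →ₗ[ℝ] ℝ where
  toFun p := ∫ x in a..b, p.eval x
  map_add' p q := by
    simpa only [eval_add] using
      integral_add (p.continuous.intervalIntegrable a b) (q.continuous.intervalIntegrable a b)
  map_smul' c p := by simp [intervalIntegral.integral_const_mul]

@[simp]
lemma intervalIntegralEval_apply (p : ℝ[X]) :
    intervalIntegralEval a b p = ∫ x in a..b, p.eval x := rfl

lemma intervalIntegralEval_derivative (p : ℝ[X]) :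
    intervalIntegralEval a b (derivative p) = p.eval b - p.eval a :=
  integral_eq_sub_of_hasDerivAt (fun x _ => p.hasDerivAt x)
    (p.derivative.continuous.intervalIntegrable a b)

lemma intervalIntegralEval_mul_self_pos (hab : a < b) {p : ℝ[X]} (hp : p ≠ 0) :
    0 < intervalIntegralEval a b (p * p) := by
  have hsupp : Function.support (fun x => (p * p).eval x) = {x | p.IsRoot x}ᶜ := by
    ext x; simp [IsRoot]
  rw [intervalIntegralEval_apply, integral_pos_iff_support_of_nonneg_ae
    (Filter.Eventually.of_forall fun x => by simpa using mul_self_nonneg (p.eval x))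
    ((p * p).continuous.intervalIntegrable a b), hsupp, Set.inter_comm, ← Set.sdiff_eq,
    measure_sdiff_null ((finite_setOfPred_isRoot hp).measure_zero _)]
  exact ⟨hab, by simpa using hab⟩

lemma intervalIntegralEval_mul_eq_zero_of_mem_degreeLT {l : ℝ[X]} {n : ℕ}
    (horth : ∀ k < n, ∫ x in a..b, l.eval x * x ^ k = 0) :
    ∀ q ∈ degreeLT ℝ n, intervalIntegralEval a b (l * q) = 0 := by
  classical
  suffices degreeLT ℝ n ≤ LinearMap.ker ((intervalIntegralEval a b).comp (LinearMap.mulLeft ℝ l))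
    from fun q hq => this hq
  rw [degreeLT_eq_span_X_pow, Submodule.span_le]
  intro q hq
  obtain ⟨k, hk, rfl⟩ := Finset.mem_image.1 hq
  simpa using horth k (Finset.mem_range.1 hk)

end IntervalIntegral

section LegendreOperator

variable {R : Type*} [CommRing R]

noncomputable def legendreOperator (p : R[X]) : R[X] :=
  derivative ((X ^ 2 - 1) * derivative p)

lemma map_legendreOperator {S : Type*} [CommRing S] (f : R →+* S) (p : R[X]) :
    (legendreOperator p).map f = legendreOperator (p.map f) := by
  simp [legendreOperator, derivative_map]

lemma coeff_legendreOperator (p : R[X]) (k : ℕ) :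
    (legendreOperator p).coeff k =
      (k * (k + 1)) * p.coeff k - ((k + 1) * (k + 2)) * p.coeff (k + 2) := by
  rw [legendreOperator, coeff_derivative, sub_mul, one_mul, coeff_sub, coeff_derivative]
  rcases k with _ | j
  · simp [coeff_X_pow_mul']
    ring
  · rw [show j + 1 + 1 = j + 2 by rfl, coeff_X_pow_mul, coeff_derivative]
    push_cast
    ring

lemma legendreOperator_mem_degreeLT {p : R[X]} {n : ℕ} (hp : p ∈ degreeLT R n) :
    legendreOperator p ∈ degreeLT R n := by
  rw [mem_degreeLT, degree_lt_iff_coeff_zero] at hp ⊢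
  intro m hm
  rw [coeff_legendreOperator, hp m hm, hp (m + 2) (by omega), mul_zero, mul_zero, sub_zero]

lemma legendreOperator_mul_sub_mul_legendreOperator (p q : R[X]) :
    legendreOperator p * q - p * legendreOperator q =
      derivative ((X ^ 2 - 1) * (derivative p * q - p * derivative q)) := by
  simp only [legendreOperator, derivative_mul, derivative_sub]
  ring

end LegendreOperator

lemma intervalIntegralEval_legendreOperator_mul (p q : ℝ[X]) :
    intervalIntegralEval (-1) 1 (legendreOperator p * q) =
      intervalIntegralEval (-1) 1 (p * legendreOperator q) := by
  rw [← sub_eq_zero, ← map_sub, legendreOperator_mul_sub_mul_legendreOperator,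
    intervalIntegralEval_derivative]
  simp

theorem legendreOperator_eq_of_orthogonal {l : ℝ[X]} {n : ℕ} (hmon : l.Monic)
    (hdeg : l.natDegree = n)
    (horth : ∀ q ∈ degreeLT ℝ n, intervalIntegralEval (-1) 1 (l * q) = 0) :
    legendreOperator l = C ((n : ℝ) * (n + 1)) * l := by
  set r := legendreOperator l - C ((n : ℝ) * (n + 1)) * l with hr
  have hr_deg : r ∈ degreeLT ℝ n := by
    rw [mem_degreeLT, degree_lt_iff_coeff_zero]
    intro m hm
    rw [hr, coeff_sub, coeff_legendreOperator, coeff_C_mul,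
      coeff_eq_zero_of_natDegree_lt (p := l) (n := m + 2) (by omega)]
    rcases hm.eq_or_lt with rfl | hlt
    · rw [← hdeg, hmon.coeff_natDegree]; ring
    · rw [coeff_eq_zero_of_natDegree_lt (by omega)]; ring
  have hr_sq : intervalIntegralEval (-1) 1 (r * r) = 0 := by
    have hrr : r * r = legendreOperator l * r - ((n : ℝ) * (n + 1)) • (l * r) := by
      nth_rewrite 1 [hr]
      rw [smul_eq_C_mul]
      ring
    calc intervalIntegralEval (-1) 1 (r * r)
        = intervalIntegralEval (-1) 1 (legendreOperator l * r) -
            (n * (n + 1)) * intervalIntegralEval (-1) 1 (l * r) := by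
          rw [hrr, map_sub, map_smul, smul_eq_mul]
      _ = intervalIntegralEval (-1) 1 (l * legendreOperator r) -
            (n * (n + 1)) * intervalIntegralEval (-1) 1 (l * r) := by
          rw [intervalIntegralEval_legendreOperator_mul]
      _ = 0 := by
          rw [horth _ (legendreOperator_mem_degreeLT hr_deg), horth r hr_deg]; ring
  by_contra hne
  exact (intervalIntegralEval_mul_self_pos (by norm_num) (sub_ne_zero.2 hne)).ne' hr_sq

theorem sq_sub_one_mul_derivative_eq_of_polar {R : Type*} [CommRing R] [IsAddTorsionFree R]
    {l P : R[X]} {c ζ : R}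
    (hl : legendreOperator l = C (c * (c + 1)) * l)
    (hP : C (c + 1) * l = derivative ((X - C ζ) * P)) :
    (X ^ 2 - 1) * derivative l =
      C c * ((X - C ζ) * P) + C (((X ^ 2 - 1) * derivative l).eval ζ) := by
  set s := (X ^ 2 - 1) * derivative l - C c * ((X - C ζ) * P) with hs
  have hs_deriv : derivative s = 0 := by
    rw [hs, derivative_sub, derivative_C_mul, ← hP, ← legendreOperator, hl, C_mul]
    ring
  have hs_eval : s.eval ζ = ((X ^ 2 - 1) * derivative l).eval ζ := by simp [hs]
  have hs_C := eq_C_of_derivative_eq_zero hs_deriv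
  rw [hs_C, eval_C] at hs_eval
  rw [← hs_eval, ← hs_C, hs]
  ring

end Polynomial

theorem polar_legendre_zeros_on_lemniscate_general
    (L : ℕ → Polynomial ℝ) (ζ : ℂ) (P : ℕ → Polynomial ℂ)
    (hL : IsMonicLegendre L) (hP : IsPolarLegendre L ζ P)
    (n : ℕ) (z₀ : ℂ) (hz₀ : (P n).eval z₀ = 0) :
    ‖(z₀ ^ 2 - 1) * (Polynomial.derivative ((L n).map (algebraMap ℝ ℂ))).eval z₀‖ =
      ‖(ζ ^ 2 - 1) * (Polynomial.derivative ((L n).map (algebraMap ℝ ℂ))).eval ζ‖ := by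
  obtain ⟨hmon, hdeg, horth⟩ := hL n
  have hode : legendreOperator ((L n).map (algebraMap ℝ ℂ)) =
      C ((n : ℂ) * (n + 1)) * (L n).map (algebraMap ℝ ℂ) := by
    simpa [map_legendreOperator] using congrArg (map (algebraMap ℝ ℂ))
      (legendreOperator_eq_of_orthogonal hmon hdeg
        (intervalIntegralEval_mul_eq_zero_of_mem_degreeLT horth))
  have hpolar : C ((n : ℂ) + 1) * (L n).map (algebraMap ℝ ℂ) = derivative ((X - C ζ) * P n) :=
    Polynomial.funext fun z => by simpa [derivative_mul] using (hP n).2.2 z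
  have key := congrArg (eval z₀) (sq_sub_one_mul_derivative_eq_of_polar hode hpolar)
  simp only [eval_mul, eval_add, eval_sub, eval_pow, eval_X, eval_one, eval_C, hz₀, mul_zero,
    zero_add] at key
  rw [key]

/-- Every zero `z₀` of `P_n` satisfies `|(z₀²-1)·L_n′(z₀)| = |(ζ²-1)·L_n′(ζ)|`, i.e. lies on
the lemniscate `{z : |(z²-1)·L_n′(z)| = |(ζ²-1)·L_n′(ζ)|}`. -/
theorem polar_legendre_zeros_on_lemniscate
    (L : ℕ → Polynomial ℝ) (ζ : ℂ) (P : ℕ → Polynomial ℂ)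
    (hL : IsMonicLegendre L) (hP : IsPolarLegendre L ζ P)
    (n : ℕ) (hn : 1 ≤ n) (z₀ : ℂ) (hz₀ : (P n).eval z₀ = 0) :
    ‖(z₀ ^ 2 - 1) * (Polynomial.derivative ((L n).map (algebraMap ℝ ℂ))).eval z₀‖ =
      ‖(ζ ^ 2 - 1) * (Polynomial.derivative ((L n).map (algebraMap ℝ ℂ))).eval ζ‖ :=
  polar_legendre_zeros_on_lemniscate_general L ζ P hL hP n z₀ hz₀
end

section
/- Let ζ ∈ ℂ, Δ_ζ = sup_{x ∈ [-1,1]} |ζ - x|, and let K be a compact subset of {z ∈ ℂ : |z| > Δ_ζ + 1}. Set d_{ζ,K} = inf{ |z - w| : z ∈ K, |w| = Δ_ζ + 1 }. Then for every n ≥ 2 and every z ∈ K one has L_n′(z) ≠ 0 and |L_n′(ζ)/L_n′(z)| < (Δ_ζ/(d_{ζ,K} + Δ_ζ))^{n-1}; consequently L_n′(ζ)/L_n′(z) → 0 as n → ∞, uniformly on K. -/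
/-!
Every zero `w` of `L_n` lies in `(-1, 1)`: writing `L_n = (X - w) r`, orthogonality of `L_n`
against the conjugate polynomial `r̄` gives `∫ (x - w) |r(x)|² dx = 0`, so `w` is a weighted mean
of the points of `(-1, 1)`. By Gauss–Lucas the `n - 1` zeros of `L_n′` lie there too, so in
`|L_n′(ζ)| / |L_n′(z)| = ∏ |ζ - w| / ∏ |z - w|` every factor `|ζ - w|` is at most `Δ_ζ` while every
`|z - w|` exceeds `|z| - 1 ≥ Δ_ζ + d_{ζ,K}`.
-/

open Polynomial

open Set Filter Topology MeasureTheory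

section RealRoots

variable {a b : ℝ}

theorem intervalIntegral_pos_of_nonneg_of_finite_zeros {f : ℝ → ℝ} (hab : a < b)
    (hf : Continuous f) (h0 : ∀ x ∈ Icc a b, 0 ≤ f x) (hfin : {x | f x = 0}.Finite) :
    0 < ∫ x in a..b, f x := by
  have hnonneg : 0 ≤ᵐ[volume.restrict (uIoc a b)] f :=
    ae_restrict_of_forall_mem measurableSet_uIoc fun x hx =>
      h0 x (Ioc_subset_Icc_self (by rwa [uIoc_of_le hab.le] at hx))
  rw [intervalIntegral.integral_pos_iff_support_of_nonneg_ae' hnonneg (hf.intervalIntegrable a b)]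
  have hsupp : Function.support f ∩ Ioc a b = Ioc a b \ {x | f x = 0} := by
    ext x; simp [and_comm]
  rw [hsupp, measure_sdiff_null (hfin.measure_zero _), Real.volume_Ioc]
  exact ⟨hab, by simpa using hab⟩

theorem exists_mem_Ioo_ofReal_eq_of_integral_sub_mul_eq_zero {g : ℝ → ℝ} (hab : a < b)
    (hg : Continuous g) (hg0 : ∀ x, 0 ≤ g x) (hfin : {x | g x = 0}.Finite) {w : ℂ}
    (hw : ∫ x in a..b, ((x : ℂ) - w) * (g x : ℂ) = 0) : ∃ x ∈ Ioo a b, (x : ℂ) = w := by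
  have hweighted_pos : ∀ c : ℝ → ℝ, Continuous c → (∀ x ∈ Icc a b, 0 ≤ c x) →
      {x | c x = 0}.Finite → 0 < ∫ x in a..b, c x * g x := fun c hc hc0 hcfin =>
    intervalIntegral_pos_of_nonneg_of_finite_zeros hab (hc.mul hg)
      (fun x hx => mul_nonneg (hc0 x hx) (hg0 x))
      ((hcfin.union hfin).subset fun x hx => mul_eq_zero.mp hx)
  have hgi : IntervalIntegrable g volume a b := hg.intervalIntegrable a b
  have hxgi : IntervalIntegrable (fun x => x * g x) volume a b :=
    (continuous_id.mul hg).intervalIntegrable a b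
  set m := ∫ x in a..b, g x
  set M := ∫ x in a..b, x * g x
  have hm : 0 < m := by
    simpa using hweighted_pos (fun _ => 1) continuous_const (by simp) (by simp)
  have hMa : a * m < M := by
    have := hweighted_pos (fun x => x - a) (by fun_prop) (fun x hx => sub_nonneg.mpr hx.1)
      ((finite_singleton a).subset fun x hx => by simpa [sub_eq_zero] using hx)
    simp_rw [sub_mul] at this
    rw [intervalIntegral.integral_sub hxgi (hgi.const_mul a),
      intervalIntegral.integral_const_mul] at this
    linarith
  have hMb : M < b * m := by
    have := hweighted_pos (fun x => b - x) (by fun_prop) (fun x hx => sub_nonneg.mpr hx.2)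
      ((finite_singleton b).subset fun x hx => by simpa [sub_eq_zero, eq_comm] using hx)
    simp_rw [sub_mul] at this
    rw [intervalIntegral.integral_sub (hgi.const_mul b) hxgi,
      intervalIntegral.integral_const_mul] at this
    linarith
  have hmoment : (M : ℂ) - w * m = 0 := by
    rw [← hw]
    simp_rw [sub_mul, ← Complex.ofReal_mul]
    rw [intervalIntegral.integral_sub, intervalIntegral.integral_const_mul,
      intervalIntegral.integral_ofReal, intervalIntegral.integral_ofReal]
    all_goals exact Continuous.intervalIntegrable (by fun_prop) a b
  refine ⟨M / m, ⟨(lt_div_iff₀ hm).mpr hMa, (div_lt_iff₀ hm).mpr hMb⟩, ?_⟩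
  rw [Complex.ofReal_div, div_eq_iff (Complex.ofReal_ne_zero.mpr hm.ne')]
  linear_combination hmoment

theorem integral_mul_eval_eq_zero_of_orthogonal {p : ℝ[X]} {n : ℕ}
    (horth : ∀ k < n, ∫ x in a..b, p.eval x * x ^ k = 0) {s : ℂ[X]} (hs : s.natDegree < n) :
    ∫ x in a..b, ((p.eval x : ℝ) : ℂ) * s.eval (x : ℂ) = 0 := by
  have hterm : ∀ k < n, ∫ x in a..b, s.coeff k * (((p.eval x : ℝ) : ℂ) * (x : ℂ) ^ k) = 0 := by
    intro k hk
    have := congrArg ((↑) : ℝ → ℂ) (horth k hk)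
    push_cast [← intervalIntegral.integral_ofReal] at this
    rw [intervalIntegral.integral_const_mul, this, mul_zero]
  simp_rw [eval_eq_sum_range' hs, Finset.mul_sum]
  rw [intervalIntegral.integral_finsetSum fun k _ => Continuous.intervalIntegrable (by fun_prop) a b]
  exact Finset.sum_eq_zero fun k hk => by
    simpa only [mul_left_comm] using hterm k (Finset.mem_range.mp hk)

theorem exists_mem_Ioo_ofReal_eq_of_isRoot {p : ℝ[X]} (hab : a < b) (hp : p ≠ 0)
    (horth : ∀ k < p.natDegree, ∫ x in a..b, p.eval x * x ^ k = 0) {w : ℂ}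
    (hw : (p.map (algebraMap ℝ ℂ)).IsRoot w) : ∃ x ∈ Ioo a b, (x : ℂ) = w := by
  set r := p.map (algebraMap ℝ ℂ) /ₘ (X - C w)
  have hfactor : (X - C w) * r = p.map (algebraMap ℝ ℂ) := mul_divByMonic_eq_iff_isRoot.mpr hw
  have hr : r ≠ 0 := by
    rintro hr0
    rw [hr0, mul_zero, eq_comm, Polynomial.map_eq_zero_iff (algebraMap ℝ ℂ).injective] at hfactor
    exact hp hfactor
  have hrdeg : r.natDegree < p.natDegree := by
    have := congrArg natDegree hfactor
    rw [natDegree_mul (X_sub_C_ne_zero w) hr, natDegree_X_sub_C, natDegree_map] at this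
    omega
  refine exists_mem_Ioo_ofReal_eq_of_integral_sub_mul_eq_zero (g := fun x => ‖r.eval (x : ℂ)‖ ^ 2)
    hab (by fun_prop) (fun x => by positivity)
    ((finite_setOfPred_isRoot hr).preimage Complex.ofReal_injective.injOn |>.subset
      fun x hx => by simpa using hx) ?_
  rw [← integral_mul_eval_eq_zero_of_orthogonal horth (s := r.map (starRingEnd ℂ))
    (by rwa [natDegree_map])]
  refine intervalIntegral.integral_congr fun x _ => ?_
  have hp_eval : ((p.eval x : ℝ) : ℂ) = ((x : ℂ) - w) * r.eval (x : ℂ) := by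
    have := congrArg (eval (x : ℂ)) hfactor
    simp only [← Complex.coe_algebraMap, eval_map, eval₂_at_apply, eval_mul, eval_sub, eval_X,
      eval_C] at this
    exact this.symm
  have hr_conj : (r.map (starRingEnd ℂ)).eval (x : ℂ) = starRingEnd ℂ (r.eval (x : ℂ)) := by
    rw [eval_map, ← Complex.conj_ofReal x, eval₂_at_apply, Complex.conj_ofReal]
  rw [hp_eval, hr_conj, mul_assoc, Complex.mul_conj']
  push_cast
  rfl

end RealRoots

theorem Polynomial.Splits.norm_eval_eq {𝕜 : Type*} [NormedField 𝕜] {p : 𝕜[X]} (hp : p.Splits)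
    (u : 𝕜) : ‖p.eval u‖ = ‖p.leadingCoeff‖ * (p.roots.map fun w => ‖u - w‖).prod := by
  rw [hp.eval_eq_prod_roots, norm_mul]
  simpa [Multiset.map_map] using
    congrArg (‖p.leadingCoeff‖ * ·) (map_multiset_prod (normHom : 𝕜 →*₀ ℝ) (p.roots.map (u - ·)))

theorem Polynomial.Splits.norm_eval_div_eval_lt_pow {𝕜 : Type*} [NormedField 𝕜] {p : 𝕜[X]}
    (hp : p.Splits) (hdeg : p.natDegree ≠ 0) {a b : 𝕜} {A B : ℝ} (hA : 0 < A) (hB : 0 < B)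
    (ha : ∀ w ∈ p.roots, ‖a - w‖ ≤ A) (hb : ∀ w ∈ p.roots, B < ‖b - w‖) :
    ‖p.eval a / p.eval b‖ < (A / B) ^ p.natDegree := by
  have hlc : ‖p.leadingCoeff‖ ≠ 0 := by
    rw [norm_ne_zero_iff, leadingCoeff_ne_zero]
    rintro rfl
    exact hdeg natDegree_zero
  have hcard : p.roots.card = p.natDegree := splits_iff_card_roots.mp hp
  have hroots : p.roots ≠ 0 := fun h => hdeg (by rw [← hcard, h, Multiset.card_zero])
  have hPa : (p.roots.map fun w => ‖a - w‖).prod ≤ A ^ p.natDegree := by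
    simpa [hcard] using Multiset.prod_map_le_prod_map₀ _ (fun _ => A)
      (fun w _ => norm_nonneg (a - w)) ha
  have hPb : B ^ p.natDegree < (p.roots.map fun w => ‖b - w‖).prod := by
    simpa [hcard] using Multiset.prod_map_lt_prod_map hroots (fun _ => B) _ (fun _ _ => hB) hb
  have hPb_pos : 0 < (p.roots.map fun w => ‖b - w‖).prod := (pow_pos hB _).trans hPb
  rw [norm_div, hp.norm_eval_eq, hp.norm_eval_eq, mul_div_mul_left _ _ hlc, div_pow]
  calc _ ≤ A ^ p.natDegree / (p.roots.map fun w => ‖b - w‖).prod := by gcongr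
    _ < A ^ p.natDegree / B ^ p.natDegree := by gcongr

theorem IsMonicLegendre.exists_mem_Ioo_ofReal_eq_of_mem_roots_derivative
    {L : ℕ → ℝ[X]} (hL : IsMonicLegendre L) {n : ℕ} (hn : n ≠ 0) {w : ℂ}
    (hw : w ∈ (derivative ((L n).map (algebraMap ℝ ℂ))).roots) :
    ∃ x ∈ Ioo (-1 : ℝ) 1, (x : ℂ) = w := by
  obtain ⟨hmonic, hdeg, horth⟩ := hL n
  have hpos : 0 < ((L n).map (algebraMap ℝ ℂ)).degree := by
    rw [degree_map, degree_eq_natDegree hmonic.ne_zero, hdeg]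
    exact_mod_cast Nat.pos_of_ne_zero hn
  have hroots : ((L n).map (algebraMap ℝ ℂ)).rootSet ℂ ⊆ (↑) '' Ioo (-1 : ℝ) 1 := by
    intro v hv
    rw [mem_rootSet, coe_aeval_eq_eval] at hv
    exact exists_mem_Ioo_ofReal_eq_of_isRoot (by norm_num) hmonic.ne_zero
      (by rw [hdeg]; exact horth) hv.2
  obtain ⟨hne, hroot⟩ := mem_roots'.mp hw
  refine convexHull_min hroots ((convex_Ioo _ _).linear_image Complex.ofRealLI.toLinearMap)
    (rootSet_derivative_subset_convexHull_rootSet hpos ?_)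
  rw [mem_rootSet, coe_aeval_eq_eval]
  exact ⟨hne, hroot⟩

theorem IsMonicLegendre.norm_derivative_eval_div_lt {L : ℕ → ℝ[X]} (hL : IsMonicLegendre L)
    {n : ℕ} (hn : 2 ≤ n) {ζ z : ℂ} {Δ d : ℝ} (hΔ : ∀ x ∈ Icc (-1 : ℝ) 1, ‖ζ - x‖ ≤ Δ)
    (hΔ0 : 0 < Δ) (hd : 0 ≤ d) (hz : Δ + 1 + d ≤ ‖z‖) :
    (derivative ((L n).map (algebraMap ℝ ℂ))).eval z ≠ 0 ∧
      ‖(derivative ((L n).map (algebraMap ℝ ℂ))).eval ζ /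
        (derivative ((L n).map (algebraMap ℝ ℂ))).eval z‖ < (Δ / (d + Δ)) ^ (n - 1) := by
  set P' := derivative ((L n).map (algebraMap ℝ ℂ))
  have hdeg : P'.natDegree = n - 1 := by rw [natDegree_derivative, natDegree_map, (hL n).2.1]
  have hroots : ∀ w ∈ P'.roots, ‖ζ - w‖ ≤ Δ ∧ d + Δ < ‖z - w‖ := by
    intro w hw
    obtain ⟨x, hx, rfl⟩ := hL.exists_mem_Ioo_ofReal_eq_of_mem_roots_derivative (by omega) hw
    have hx1 : ‖(x : ℂ)‖ < 1 := by rw [Complex.norm_real, Real.norm_eq_abs, abs_lt]; exact hx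
    exact ⟨hΔ x (Ioo_subset_Icc_self hx), by linarith [norm_sub_norm_le z x]⟩
  refine ⟨fun hz0 => ?_, ?_⟩
  · have hP' : P' ≠ 0 := fun h => by rw [h, natDegree_zero] at hdeg; omega
    have := (hroots z ((mem_roots hP').mpr hz0)).2
    rw [sub_self, norm_zero] at this
    linarith
  · rw [← hdeg]
    exact (IsAlgClosed.splits P').norm_eval_div_eval_lt_pow (by omega) hΔ0 (by linarith)
      (fun w hw => (hroots w hw).1) (fun w hw => (hroots w hw).2)

theorem norm_sub_le_iSup_Icc (ζ : ℂ) {x : ℝ} (hx : x ∈ Icc (-1 : ℝ) 1) :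
    ‖ζ - x‖ ≤ ⨆ y : Icc (-1 : ℝ) 1, ‖ζ - (y : ℝ)‖ :=
  le_ciSup (f := fun y : Icc (-1 : ℝ) 1 => ‖ζ - (y : ℝ)‖)
    (isCompact_range (by fun_prop)).bddAbove ⟨x, hx⟩

theorem one_le_iSup_Icc (ζ : ℂ) : 1 ≤ ⨆ y : Icc (-1 : ℝ) 1, ‖ζ - (y : ℝ)‖ := by
  have h2 : (2 : ℝ) ≤ ‖ζ - ((-1 : ℝ) : ℂ)‖ + ‖ζ - ((1 : ℝ) : ℂ)‖ := by
    have := norm_sub_le (ζ - ((-1 : ℝ) : ℂ)) (ζ - ((1 : ℝ) : ℂ))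
    rwa [show ζ - ((-1 : ℝ) : ℂ) - (ζ - ((1 : ℝ) : ℂ)) = 2 by push_cast; ring, Complex.norm_two]
      at this
  linarith [norm_sub_le_iSup_Icc ζ (x := -1) (by norm_num),
    norm_sub_le_iSup_Icc ζ (x := 1) (by norm_num)]

section SphereDistance

variable {E : Type*} [NormedAddCommGroup E] [NormedSpace ℝ E] {K : Set E} {R : ℝ}

theorem exists_norm_eq_and_norm_sub_eq (hR : 0 ≤ R) {z : E} (hRz : R < ‖z‖) :
    ∃ w : E, ‖w‖ = R ∧ ‖z - w‖ = ‖z‖ - R := by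
  have hz : 0 < ‖z‖ := hR.trans_lt hRz
  refine ⟨(R / ‖z‖) • z, ?_, ?_⟩
  · rw [norm_smul, Real.norm_of_nonneg (by positivity), div_mul_cancel₀ _ hz.ne']
  · rw [show z - (R / ‖z‖) • z = (1 - R / ‖z‖) • z by rw [sub_smul, one_smul], norm_smul,
      Real.norm_of_nonneg (by rw [sub_nonneg, div_le_one hz]; exact hRz.le)]
    field_simp

theorem add_sInf_norm_sub_le_norm (hR : 0 ≤ R) {z : E} (hz : z ∈ K) (hRz : R < ‖z‖) :
    R + sInf {r : ℝ | ∃ z' ∈ K, ∃ w : E, ‖w‖ = R ∧ r = ‖z' - w‖} ≤ ‖z‖ := by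
  obtain ⟨w, hw, hzw⟩ := exists_norm_eq_and_norm_sub_eq hR hRz
  have : sInf {r : ℝ | ∃ z' ∈ K, ∃ w : E, ‖w‖ = R ∧ r = ‖z' - w‖} ≤ ‖z - w‖ :=
    csInf_le ⟨0, by rintro _ ⟨_, _, _, _, rfl⟩; exact norm_nonneg _⟩ ⟨z, hz, w, hw, rfl⟩
  linarith

theorem sInf_norm_sub_pos (hR : 0 ≤ R) (hK : IsCompact K) (hne : K.Nonempty)
    (hKR : K ⊆ {z | R < ‖z‖}) :
    0 < sInf {r : ℝ | ∃ z' ∈ K, ∃ w : E, ‖w‖ = R ∧ r = ‖z' - w‖} := by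
  obtain ⟨z₀, hz₀, hmin⟩ := hK.exists_isMinOn hne continuous_norm.continuousOn
  obtain ⟨w₀, hw₀, -⟩ := exists_norm_eq_and_norm_sub_eq hR (hKR hz₀)
  have hle : ‖z₀‖ - R ≤ sInf {r : ℝ | ∃ z' ∈ K, ∃ w : E, ‖w‖ = R ∧ r = ‖z' - w‖} := by
    refine le_csInf ⟨_, z₀, hz₀, w₀, hw₀, rfl⟩ ?_
    rintro _ ⟨z', hz', w, hw, rfl⟩
    have hz' : ‖z₀‖ ≤ ‖z'‖ := hmin hz'
    linarith [norm_sub_norm_le z' w]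
  have hz₀R : R < ‖z₀‖ := hKR hz₀
  linarith

end SphereDistance

theorem tendstoUniformlyOn_zero_of_norm_le {ι α G : Type*} [SeminormedAddGroup G]
    {l : Filter ι} {F : ι → α → G} {s : Set α} {u : ι → ℝ} (hu : Tendsto u l (𝓝 0))
    (hF : ∀ᶠ i in l, ∀ x ∈ s, ‖F i x‖ ≤ u i) : TendstoUniformlyOn F 0 l s := by
  rw [SeminormedAddGroup.tendstoUniformlyOn_zero]
  intro ε hε
  filter_upwards [hF, hu.eventually (gt_mem_nhds hε)] with i hi hui x hx
  exact (hi x hx).trans_lt hui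

/-- On a compact `K ⊆ {|z| > Δ_ζ + 1}`, for each `n ≥ 2` and `z ∈ K` we have `L_n′(z) ≠ 0`
and `|L_n′(ζ)/L_n′(z)| < (Δ_ζ/(d_{ζ,K}+Δ_ζ))^{n-1}`; consequently `L_n′(ζ)/L_n′(z) → 0`
uniformly on `K`. -/
theorem legendre_derivative_ratio_tendsto_zero
    (L : ℕ → Polynomial ℝ) (ζ : ℂ)
    (hL : IsMonicLegendre L)
    (K : Set ℂ) (hK : IsCompact K)
    (hKsub : K ⊆ {z : ℂ | (⨆ x : Set.Icc (-1:ℝ) 1, ‖ζ - (x : ℝ)‖) + 1 <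
        ‖z‖}) :
    (∀ n : ℕ, 2 ≤ n → ∀ z ∈ K,
      (Polynomial.derivative ((L n).map (algebraMap ℝ ℂ))).eval z ≠ 0 ∧
      ‖(Polynomial.derivative ((L n).map (algebraMap ℝ ℂ))).eval ζ /
          (Polynomial.derivative ((L n).map (algebraMap ℝ ℂ))).eval z‖ <
        ((⨆ x : Set.Icc (-1:ℝ) 1, ‖ζ - (x : ℝ)‖) /
          (sInf {r : ℝ | ∃ z' ∈ K, ∃ w : ℂ,
              ‖w‖ = (⨆ x : Set.Icc (-1:ℝ) 1, ‖ζ - (x : ℝ)‖) + 1 ∧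
              r = ‖z' - w‖} +
            (⨆ x : Set.Icc (-1:ℝ) 1, ‖ζ - (x : ℝ)‖))) ^ (n - 1)) ∧
    TendstoUniformlyOn
      (fun (n : ℕ) (z : ℂ) =>
        (Polynomial.derivative ((L n).map (algebraMap ℝ ℂ))).eval ζ /
          (Polynomial.derivative ((L n).map (algebraMap ℝ ℂ))).eval z)
      (fun _ => 0) Filter.atTop K := by
  set Δ := ⨆ x : Set.Icc (-1:ℝ) 1, ‖ζ - (x : ℝ)‖
  set d := sInf {r : ℝ | ∃ z' ∈ K, ∃ w : ℂ, ‖w‖ = Δ + 1 ∧ r = ‖z' - w‖}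
  have hΔ : 1 ≤ Δ := one_le_iSup_Icc ζ
  have hd : 0 ≤ d := Real.sInf_nonneg (by rintro _ ⟨_, _, _, _, rfl⟩; exact norm_nonneg _)
  have hbound : ∀ n, 2 ≤ n → ∀ z ∈ K, _ := fun n hn z hz =>
    hL.norm_derivative_eval_div_lt hn (fun x hx => norm_sub_le_iSup_Icc ζ hx) (by linarith) hd
      (by linarith [add_sInf_norm_sub_le_norm (by linarith) hz (hKsub hz)])
  refine ⟨hbound, ?_⟩
  rcases K.eq_empty_or_nonempty with rfl | hKne
  · exact tendstoUniformlyOn_empty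
  have hdpos : 0 < d := sInf_norm_sub_pos (by linarith) hK hKne hKsub
  have hq : Δ / (d + Δ) < 1 := (div_lt_one (by linarith)).mpr (by linarith)
  refine tendstoUniformlyOn_zero_of_norm_le ((tendsto_pow_atTop_nhds_zero_of_lt_one
    (by positivity) hq).comp (tendsto_sub_atTop_nat 1)) ?_
  filter_upwards [eventually_ge_atTop 2] with n hn z hz using (hbound n hn z hz).2.le
end
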